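/- arXiv:1501.06726 — 3 statements merged into one kernel-verified Lean document; each statement's English description precedes it below -/
import Mathlib

section
/- Let m ≥ 2 be an even integer and n ≥ 1. Let c ∈ ℝ^n satisfy c_{i_1}+⋯+c_{i_m} ≠ 0 for all i_1,…,i_m ∈ {1,…,n}, and let C be the Cauchy tensor with generating vector c. Then the following statements are equivalent: (i) C is an SOS tensor; (ii) C is positive semi-definite; (iii) C is a completely positive tensor; (iv) c_i > 0 for all i ∈ {1,…,n}. -/
/-!
(i) ⇒ (ii) ⇒ (iv) ⇒ (iii) ⇒ (i). A sum of squares is nonnegative, and evaluating the form at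
the basis vector `e_l` gives `1 / (m c_l)`. A completely positive tensor `∑ₖ uₖ^m` has form
`∑ₖ ⟨uₖ, x⟩^m`, a sum of squares of the forms `⟨uₖ, x⟩^(m/2)`. For `c > 0`, choose `κ` with
`κ c_l ≥ 1`; then `1 / s = ∫₀¹ κ t^(κ s - 1) dt`, and at each `t` the integrand, as a function
of the index `i`, is the rank-one power `f(t)^m` of the nonnegative vector
`f(t)_l = κ^(1/m) t^(κ c_l - 1/m)`. So the Cauchy tensor is the barycentre of a probability
measure on the compact set `{f(t)^m : t ∈ [0, 1]}`. That barycentre lies in the convex hull,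
which is compact by Carathéodory's theorem, so the tensor is a finite convex combination of
rank-one powers of nonnegative vectors.
-/

open Finset

/-- `A x^m = ∑_{i_1,…,i_m} a_{i_1⋯i_m} x_{i_1}⋯x_{i_m}` for an order `m` dimension `n` tensor. -/
noncomputable def tApply (m n : ℕ) (a : (Fin m → Fin n) → ℝ) (x : Fin n → ℝ) : ℝ :=
  ∑ i : Fin m → Fin n, a i * ∏ j, x (i j)

/-- An (even order) tensor is positive semi-definite if `A x^m ≥ 0` for all `x`. -/
def IsPSD (m n : ℕ) (a : (Fin m → Fin n) → ℝ) : Prop :=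
  ∀ x : Fin n → ℝ, 0 ≤ tApply m n a x

/-- Cauchy tensor with generating vector `c`: entries `1 / (c_{i_1}+⋯+c_{i_m})`. -/
noncomputable def cauchyT (m n : ℕ) (c : Fin n → ℝ) : (Fin m → Fin n) → ℝ :=
  fun i => 1 / (∑ j, c (i j))

/-- A tensor of even order `m` is an SOS tensor if the form `A x^m` is a finite sum of squares
of homogeneous polynomials of degree `m/2`. -/
def IsSOS (m n : ℕ) (a : (Fin m → Fin n) → ℝ) : Prop :=
  ∃ (r : ℕ) (p : Fin r → MvPolynomial (Fin n) ℝ),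
    (∀ k, (p k).IsHomogeneous (m / 2)) ∧
    ∀ x : Fin n → ℝ, tApply m n a x = ∑ k, (MvPolynomial.eval x (p k)) ^ 2

/-- A tensor is completely positive if it is a finite sum of `m`-th rank-one powers `u^m`
with nonnegative vectors `u`. -/
def IsCompletelyPositive (m n : ℕ) (a : (Fin m → Fin n) → ℝ) : Prop :=
  ∃ (r : ℕ) (u : Fin r → Fin n → ℝ), (∀ k l, 0 ≤ u k l) ∧ ∀ i, a i = ∑ k, ∏ j, u k (i j)

open MeasureTheory

theorem isCompact_convexHull_of_isCompact {E : Type*} [NormedAddCommGroup E] [NormedSpace ℝ E]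
    [FiniteDimensional ℝ E] {K : Set E} (hK : IsCompact K) : IsCompact (convexHull ℝ K) := by
  let combinations (k : ℕ) : Set E :=
    (fun p : (Fin k → ℝ) × (Fin k → E) => ∑ i, p.1 i • p.2 i) ''
      (stdSimplex ℝ (Fin k) ×ˢ Set.univ.pi fun _ => K)
  have hcompact (k : ℕ) : IsCompact (combinations k) :=
    ((isCompact_stdSimplex ℝ _).prod (isCompact_univ_pi fun _ => hK)).image (by fun_prop)
  have hsub (k : ℕ) : combinations k ⊆ convexHull ℝ K := by
    rintro _ ⟨⟨w, z⟩, ⟨hw, hz⟩, rfl⟩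
    exact mem_convexHull_of_exists_fintype w z hw.1 hw.2 (fun i => hz i trivial) rfl
  -- Carathéodory: at most `finrank ℝ E + 1` points are needed.
  have hcover : convexHull ℝ K = ⋃ k ∈ range (Module.finrank ℝ E + 2), combinations k := by
    refine subset_antisymm (fun x hx => ?_) (Set.iUnion₂_subset fun k _ => hsub k)
    obtain ⟨ι, _, z, w, hzK, hai, hw0, hw1, rfl⟩ := eq_pos_convex_span_of_mem_convexHull hx
    have hcard : Fintype.card ι < Module.finrank ℝ E + 2 :=
      hai.card_le_finrank_succ.trans_lt
        (Nat.succ_lt_succ ((Submodule.finrank_le (vectorSpan ℝ (Set.range z))).trans_lt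
          (Nat.lt_succ_self _)))
    let e := (Fintype.equivFin ι).symm
    refine Set.mem_biUnion (mem_range.2 hcard) ⟨(w ∘ e, z ∘ e), ⟨⟨fun i => (hw0 _).le, ?_⟩,
      fun i _ => hzK ⟨_, rfl⟩⟩, e.sum_comp fun i => w i • z i⟩
    simpa only [Function.comp_apply, e.sum_comp] using hw1
  rw [hcover]
  exact (range _).isCompact_biUnion fun k _ => hcompact k

section

variable {m n : ℕ}

def rankOnePow (m n : ℕ) (u : Fin n → ℝ) : (Fin m → Fin n) → ℝ :=
  fun i => ∏ j, u (i j)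

@[fun_prop]
theorem continuous_rankOnePow : Continuous (rankOnePow m n) := by
  unfold rankOnePow; fun_prop

theorem rankOnePow_smul {w : ℝ} (hw : 0 ≤ w) (hm : m ≠ 0) (u : Fin n → ℝ) :
    rankOnePow m n (w ^ (m⁻¹ : ℝ) • u) = w • rankOnePow m n u := by
  funext i
  simp [rankOnePow, prod_mul_distrib, Real.rpow_inv_natCast_pow hw hm]

theorem rankOnePow_rpow {t : ℝ} (ht : 0 ≤ t) {p : Fin n → ℝ} (hp : ∀ l, 0 ≤ p l) :
    rankOnePow m n (fun l => t ^ p l) = fun i => t ^ ∑ j, p (i j) := by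
  funext i
  exact (Real.rpow_sum_of_nonneg ht fun j _ => hp (i j)).symm

theorem isCompletelyPositive_iff_eq_sum_rankOnePow {a : (Fin m → Fin n) → ℝ} :
    IsCompletelyPositive m n a ↔
      ∃ (r : ℕ) (u : Fin r → Fin n → ℝ), (∀ k, 0 ≤ u k) ∧ a = ∑ k, rankOnePow m n (u k) := by
  simp only [IsCompletelyPositive, funext_iff, Pi.le_def, Pi.zero_apply, Finset.sum_apply,
    rankOnePow]

theorem isCompletelyPositive_of_mem_convexHull (hm : m ≠ 0) {a : (Fin m → Fin n) → ℝ}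
    (ha : a ∈ convexHull ℝ (rankOnePow m n '' {u | 0 ≤ u})) : IsCompletelyPositive m n a := by
  obtain ⟨ι, _, w, z, hw0, -, hz, rfl⟩ := mem_convexHull_iff_exists_fintype.1 ha
  choose v hv0 hvz using hz
  let e := (Fintype.equivFin ι).symm
  refine isCompletelyPositive_iff_eq_sum_rankOnePow.2
    ⟨_, fun k => w (e k) ^ (m⁻¹ : ℝ) • v (e k),
      fun k => smul_nonneg (Real.rpow_nonneg (hw0 _) _) (hv0 _), ?_⟩
  simp only [rankOnePow_smul (hw0 _) hm, hvz]
  exact (e.sum_comp fun i => w i • z i).symm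

theorem isCompletelyPositive_integral (hm : m ≠ 0) {X : Type*} [MeasurableSpace X]
    (μ : Measure X) [IsProbabilityMeasure μ] {f : X → Fin n → ℝ} {K : Set (Fin n → ℝ)}
    (hK : IsCompact K) (hK0 : ∀ u ∈ K, 0 ≤ u) (hfK : ∀ᵐ x ∂μ, f x ∈ K)
    (hf : Integrable (fun x => rankOnePow m n (f x)) μ) :
    IsCompletelyPositive m n (∫ x, rankOnePow m n (f x) ∂μ) := by
  have hmem : ∫ x, rankOnePow m n (f x) ∂μ ∈ convexHull ℝ (rankOnePow m n '' K) :=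
    (convex_convexHull ℝ _).integral_mem
      (isCompact_convexHull_of_isCompact (hK.image continuous_rankOnePow)).isClosed
      (hfK.mono fun x hx => subset_convexHull ℝ _ (Set.mem_image_of_mem _ hx)) hf
  exact isCompletelyPositive_of_mem_convexHull hm
    (convexHull_mono (Set.image_mono fun u hu => hK0 u hu) hmem)

theorem integral_Icc_mul_rpow {κ s : ℝ} (hκs : 0 < κ * s) :
    ∫ t in Set.Icc (0 : ℝ) 1, κ * t ^ (κ * s - 1) = 1 / s := by
  rw [integral_Icc_eq_integral_Ioc, ← intervalIntegral.integral_of_le zero_le_one,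
    intervalIntegral.integral_const_mul, integral_rpow (Or.inl (by linarith)),
    sub_add_cancel, Real.one_rpow, Real.zero_rpow hκs.ne', sub_zero, mul_one_div,
    div_mul_cancel_left₀ (left_ne_zero_of_mul hκs.ne'), one_div]

theorem isCompletelyPositive_cauchyT (hm : m ≠ 0) {c : Fin n → ℝ} (hc : ∀ l, 0 < c l) :
    IsCompletelyPositive m n (cauchyT m n c) := by
  -- The rescaling by `κ` makes the exponents below nonnegative, so that the curve `f` is
  -- continuous on `[0, 1]`.
  obtain ⟨κ, hκ0, hκ⟩ : ∃ κ : ℝ, 0 ≤ κ ∧ ∀ l, 1 ≤ κ * c l := by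
    have hinv (l : Fin n) : 0 ≤ (c l)⁻¹ := (inv_pos.2 (hc l)).le
    refine ⟨∑ l, (c l)⁻¹, sum_nonneg fun l _ => hinv l, fun l => ?_⟩
    calc 1 = (c l)⁻¹ * c l := (inv_mul_cancel₀ (hc l).ne').symm
      _ ≤ _ := mul_le_mul_of_nonneg_right (single_le_sum (fun l _ => hinv l) (mem_univ l))
          (hc l).le
  have hm1 : (1 : ℝ) ≤ m := by exact_mod_cast Nat.one_le_iff_ne_zero.2 hm
  have hp (l : Fin n) : 0 ≤ κ * c l - (m : ℝ)⁻¹ := by linarith [hκ l, inv_le_one_of_one_le₀ hm1]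
  have hs (i : Fin m → Fin n) : 0 < κ * ∑ j, c (i j) := by
    rw [mul_sum]
    calc (0 : ℝ) < ∑ _j : Fin m, 1 := by simpa using Nat.pos_of_ne_zero hm
      _ ≤ _ := sum_le_sum fun j _ => hκ (i j)
  let f (t : ℝ) : Fin n → ℝ := κ ^ (m⁻¹ : ℝ) • fun l => t ^ (κ * c l - (m : ℝ)⁻¹)
  have hf : Continuous f :=
    (continuous_pi fun l => Real.continuous_rpow_const (hp l)).const_smul (κ ^ (m⁻¹ : ℝ))
  have hf_pow (t : ℝ) (ht : t ∈ Set.Icc (0 : ℝ) 1) :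
      rankOnePow m n (f t) = fun i => κ * t ^ (κ * ∑ j, c (i j) - 1) := by
    rw [rankOnePow_smul hκ0 hm, rankOnePow_rpow ht.1 hp]
    funext i
    simp [sum_sub_distrib, mul_sum, hm]
  have hint : Integrable (fun t => rankOnePow m n (f t)) (volume.restrict (Set.Icc (0 : ℝ) 1)) :=
    (continuous_rankOnePow.comp hf).integrableOn_Icc
  have hcauchy : cauchyT m n c = ∫ t in Set.Icc (0 : ℝ) 1, rankOnePow m n (f t) := by
    funext i
    rw [eval_integral hint.eval, setIntegral_congr_fun measurableSet_Icc
      fun t ht => congrFun (hf_pow t ht) i, integral_Icc_mul_rpow (hs i), cauchyT]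
  have : IsProbabilityMeasure (volume.restrict (Set.Icc (0 : ℝ) 1)) := ⟨by simp⟩
  rw [hcauchy]
  refine isCompletelyPositive_integral hm _ (isCompact_Icc.image hf) ?_
    ((ae_restrict_mem measurableSet_Icc).mono fun t ht => Set.mem_image_of_mem f ht) hint
  rintro _ ⟨t, ht, rfl⟩
  exact smul_nonneg (Real.rpow_nonneg hκ0 _) fun l => Real.rpow_nonneg ht.1 _

theorem tApply_sum {r : ℕ} (a : Fin r → (Fin m → Fin n) → ℝ) (x : Fin n → ℝ) :
    tApply m n (∑ k, a k) x = ∑ k, tApply m n (a k) x := by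
  simp only [tApply, Finset.sum_apply, sum_mul]
  exact sum_comm

theorem tApply_rankOnePow (u x : Fin n → ℝ) :
    tApply m n (rankOnePow m n u) x = (∑ l, u l * x l) ^ m := by
  simp only [tApply, rankOnePow, ← prod_mul_distrib, Fintype.sum_pow]

theorem tApply_single (a : (Fin m → Fin n) → ℝ) (l : Fin n) :
    tApply m n a (Pi.single l 1) = a fun _ => l := by
  rw [tApply, Fintype.sum_eq_single fun _ => l]
  · simp
  · intro i hi
    obtain ⟨j, hj⟩ := Function.ne_iff.1 hi
    rw [prod_eq_zero (mem_univ j) (Pi.single_eq_of_ne hj 1), mul_zero]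

theorem IsSOS.isPSD {a : (Fin m → Fin n) → ℝ} (h : IsSOS m n a) : IsPSD m n a := by
  obtain ⟨r, p, -, hp⟩ := h
  intro x
  rw [hp]
  exact sum_nonneg fun k _ => sq_nonneg _

theorem IsCompletelyPositive.isSOS (hm : Even m) {a : (Fin m → Fin n) → ℝ}
    (h : IsCompletelyPositive m n a) : IsSOS m n a := by
  obtain ⟨r, u, -, rfl⟩ := isCompletelyPositive_iff_eq_sum_rankOnePow.1 h
  let linearForm (k : Fin r) : MvPolynomial (Fin n) ℝ :=
    ∑ l, MvPolynomial.C (u k l) * MvPolynomial.X l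
  have hlinear (k : Fin r) : (linearForm k).IsHomogeneous 1 :=
    MvPolynomial.IsHomogeneous.sum _ _ _ fun l _ => MvPolynomial.isHomogeneous_C_mul_X _ _
  refine ⟨r, fun k => linearForm k ^ (m / 2), fun k => by simpa using (hlinear k).pow (m / 2), ?_⟩
  intro x
  simp [linearForm, tApply_sum, tApply_rankOnePow, ← pow_mul, Nat.div_mul_cancel hm.two_dvd]

theorem IsPSD.pos_of_cauchyT {c : Fin n → ℝ} (hc : ∀ i : Fin m → Fin n, ∑ j, c (i j) ≠ 0)
    (h : IsPSD m n (cauchyT m n c)) (l : Fin n) : 0 < c l := by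
  have hdiag : cauchyT m n c (fun _ => l) = 1 / (m * c l) := by simp [cauchyT]
  have hnonneg : 0 ≤ 1 / ((m : ℝ) * c l) := hdiag ▸ tApply_single (cauchyT m n c) l ▸ h _
  have hpos : 0 < (m : ℝ) * c l :=
    one_div_pos.1 (hnonneg.lt_of_ne (one_div_ne_zero (by simpa using hc fun _ => l)).symm)
  exact pos_of_mul_pos_right hpos m.cast_nonneg

end

theorem stmt_3_general (m n : ℕ) (hm : 2 ≤ m) (hme : Even m)
    (c : Fin n → ℝ)
    (hc : ∀ i : Fin m → Fin n, ∑ j, c (i j) ≠ 0) :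
    List.TFAE [IsSOS m n (cauchyT m n c),
               IsPSD m n (cauchyT m n c),
               IsCompletelyPositive m n (cauchyT m n c),
               ∀ i : Fin n, 0 < c i] := by
  tfae_have 1 → 2 := IsSOS.isPSD
  tfae_have 2 → 4 := fun h => h.pos_of_cauchyT hc
  tfae_have 4 → 3 := isCompletelyPositive_cauchyT (by omega)
  tfae_have 3 → 1 := IsCompletelyPositive.isSOS hme
  tfae_finish

/-- Corollary 3.1: for an even order Cauchy tensor, the SOS property, positive
semi-definiteness, complete positivity and positivity of the generating vector
are all equivalent. -/
theorem stmt_3 (m n : ℕ) (hm : 2 ≤ m) (hme : Even m) (hn : 1 ≤ n)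
    (c : Fin n → ℝ)
    (hc : ∀ i : Fin m → Fin n, ∑ j, c (i j) ≠ 0) :
    List.TFAE [IsSOS m n (cauchyT m n c),
               IsPSD m n (cauchyT m n c),
               IsCompletelyPositive m n (cauchyT m n c),
               ∀ i : Fin n, 0 < c i] :=
  stmt_3_general m n hm hme c hc
end

section
/- Let m ≥ 2 be an even integer and let A be a Hankel tensor of order m and dimension n whose Vandermonde rank r satisfies r ≤ n. Then the following statements are equivalent: (i) A is positive semi-definite; (ii) A is a complete Hankel tensor; (iii) A is an SOS tensor. -/
/-! A Vandermonde decomposition `a = ∑ α_k u_k^m` turns the form into `A x^m = ∑ α_k ⟨u_k, x⟩^m`.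
Complete Hankel tensors are therefore SOS (take `√α_k ⟨u_k, x⟩^(m/2)`), and SOS tensors are
PSD. Conversely, when `r ≤ n` Lagrange interpolation at the distinct nodes `μ_k` gives a
polynomial of degree `< n` that is `1` at `μ_{k₀}` and `0` at the other nodes; its coefficient
vector `x` satisfies `⟨u_k, x⟩ = δ_{k k₀}`, so `A x^m = α_{k₀}`, and PSD forces `α_{k₀} > 0`. -/

open Finset

/-- A Vandermonde decomposition with `r` terms of an order `m` dimension `n` tensor:
`a = ∑_{k=1}^r α_k u_k^m` with `α_k ≠ 0` and `u_k = (1, μ_k, …, μ_k^{n-1})`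
Vandermonde vectors with mutually distinct `μ_k`. -/
def HasVDecomp (m n : ℕ) (a : (Fin m → Fin n) → ℝ) (r : ℕ) : Prop :=
  ∃ (α : Fin r → ℝ) (μ : Fin r → ℝ), (∀ k, α k ≠ 0) ∧ Function.Injective μ ∧
    ∀ i : Fin m → Fin n, a i = ∑ k, α k * ∏ j, μ k ^ (i j : ℕ)

/-- A complete Hankel tensor: one admitting a Vandermonde decomposition with all
coefficients positive. -/
def IsCompleteHankel (m n : ℕ) (a : (Fin m → Fin n) → ℝ) : Prop :=
  ∃ (r : ℕ) (α : Fin r → ℝ) (μ : Fin r → ℝ), (∀ k, 0 < α k) ∧ Function.Injective μ ∧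
    ∀ i : Fin m → Fin n, a i = ∑ k, α k * ∏ j, μ k ^ (i j : ℕ)

lemma tApply_eq_sum_pow {m n r : ℕ} {a : (Fin m → Fin n) → ℝ} {α μ : Fin r → ℝ}
    (h : ∀ i : Fin m → Fin n, a i = ∑ k, α k * ∏ j, μ k ^ (i j : ℕ)) (x : Fin n → ℝ) :
    tApply m n a x = ∑ k, α k * (∑ t : Fin n, μ k ^ (t : ℕ) * x t) ^ m := by
  have hpow : ∀ k : Fin r, (∑ t : Fin n, μ k ^ (t : ℕ) * x t) ^ m
      = ∑ i : Fin m → Fin n, ∏ j, (μ k ^ (i j : ℕ) * x (i j)) := by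
    intro k
    rw [← Fin.prod_const m, Finset.prod_univ_sum, Fintype.piFinset_univ]
  simp_rw [tApply, hpow, h, Finset.sum_mul, Finset.mul_sum, Finset.prod_mul_distrib, mul_assoc]
  rw [Finset.sum_comm]

lemma exists_sum_pow_mul_eq_single {K : Type*} [Field K] {r n : ℕ} {μ : Fin r → K}
    (hμ : Function.Injective μ) (hr : r ≤ n) (k₀ : Fin r) :
    ∃ x : Fin n → K, ∀ k, ∑ t : Fin n, μ k ^ (t : ℕ) * x t = (Pi.single k₀ 1 : Fin r → K) k := by
  have hμ' : Set.InjOn μ (univ : Finset (Fin r)) := hμ.injOn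
  set p := Lagrange.interpolate univ μ (Pi.single k₀ 1)
  have hdeg : p.natDegree < n := by
    rcases eq_or_ne p 0 with h0 | h0
    · rw [h0, Polynomial.natDegree_zero]
      exact k₀.pos.trans_le hr
    · rw [Polynomial.natDegree_lt_iff_degree_lt h0]
      calc p.degree < (univ : Finset (Fin r)).card := Lagrange.degree_interpolate_lt _ hμ'
        _ ≤ n := by simpa using hr
  refine ⟨fun t => p.coeff t, fun k => ?_⟩
  calc ∑ t : Fin n, μ k ^ (t : ℕ) * p.coeff t = ∑ i ∈ range n, p.coeff i * μ k ^ i := by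
        rw [← Fin.sum_univ_eq_sum_range]
        simp_rw [mul_comm]
    _ = p.eval (μ k) := (Polynomial.eval_eq_sum_range' hdeg _).symm
    _ = (Pi.single k₀ 1 : Fin r → K) k := Lagrange.eval_interpolate_at_node _ hμ' (mem_univ k)

lemma coeff_nonneg_of_isPSD {m n r : ℕ} (hm : m ≠ 0) {a : (Fin m → Fin n) → ℝ}
    (ha : IsPSD m n a) {α μ : Fin r → ℝ} (hμ : Function.Injective μ) (hr : r ≤ n)
    (h : ∀ i : Fin m → Fin n, a i = ∑ k, α k * ∏ j, μ k ^ (i j : ℕ)) (k₀ : Fin r) :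
    0 ≤ α k₀ := by
  obtain ⟨x, hx⟩ := exists_sum_pow_mul_eq_single hμ hr k₀
  have hform : tApply m n a x = α k₀ := by
    simp_rw [tApply_eq_sum_pow h, hx]
    rw [Finset.sum_eq_single k₀ (fun k _ hk => by simp [hk, hm]) (by simp)]
    simp
  exact hform ▸ ha x

lemma isCompleteHankel_of_isPSD {m n r : ℕ} (hm : m ≠ 0) {a : (Fin m → Fin n) → ℝ}
    (hdec : HasVDecomp m n a r) (hr : r ≤ n) (ha : IsPSD m n a) : IsCompleteHankel m n a := by
  obtain ⟨α, μ, hα, hμ, h⟩ := hdec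
  exact ⟨r, α, μ, fun k => (coeff_nonneg_of_isPSD hm ha hμ hr h k).lt_of_ne' (hα k), hμ, h⟩

lemma isSOS_of_isCompleteHankel {m n : ℕ} (hm : Even m) {a : (Fin m → Fin n) → ℝ}
    (ha : IsCompleteHankel m n a) : IsSOS m n a := by
  obtain ⟨s, β, ν, hβ, -, h⟩ := ha
  refine ⟨s, fun k => MvPolynomial.C (√(β k)) *
      (∑ t : Fin n, MvPolynomial.C (ν k ^ (t : ℕ)) * MvPolynomial.X t) ^ (m / 2),
    fun k => ?_, fun x => ?_⟩
  · have hlin := MvPolynomial.IsHomogeneous.sum univ _ 1 fun (t : Fin n) _ =>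
      MvPolynomial.isHomogeneous_C_mul_X (ν k ^ (t : ℕ)) t
    simpa only [one_mul] using (hlin.pow (m / 2)).C_mul (√(β k))
  · rw [tApply_eq_sum_pow h x]
    refine Finset.sum_congr rfl fun k _ => ?_
    simp only [map_mul, MvPolynomial.eval_C, map_pow, map_sum, MvPolynomial.eval_X]
    rw [mul_pow, ← pow_mul, Real.sq_sqrt (hβ k).le, Nat.div_mul_cancel hm.two_dvd]

lemma isPSD_of_isSOS {m n : ℕ} {a : (Fin m → Fin n) → ℝ} (ha : IsSOS m n a) : IsPSD m n a := by
  obtain ⟨s, p, -, h⟩ := ha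
  intro x
  rw [h x]
  exact Finset.sum_nonneg fun k _ => sq_nonneg _

theorem stmt_11_general (m n r : ℕ) (hm : 2 ≤ m) (hme : Even m)
    (a : (Fin m → Fin n) → ℝ)
    (hdec : HasVDecomp m n a r)
    (hr : r ≤ n) :
    List.TFAE [IsPSD m n a, IsCompleteHankel m n a, IsSOS m n a] := by
  tfae_have 1 → 2 := isCompleteHankel_of_isPSD (by omega) hdec hr
  tfae_have 2 → 3 := isSOS_of_isCompleteHankel hme
  tfae_have 3 → 1 := isPSD_of_isSOS
  tfae_finish

/-- Theorem 4.2: for an even order Hankel tensor whose Vandermonde rank `r` satisfies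
`r ≤ n`, positive semi-definiteness, being a complete Hankel tensor, and the SOS
property are equivalent. -/
theorem stmt_11 (m n r : ℕ) (hm : 2 ≤ m) (hme : Even m) (hn : 1 ≤ n)
    (a : (Fin m → Fin n) → ℝ)
    (hdec : HasVDecomp m n a r)
    (hmin : ∀ s : ℕ, HasVDecomp m n a s → r ≤ s)
    (hr : r ≤ n) :
    List.TFAE [IsPSD m n a, IsCompleteHankel m n a, IsSOS m n a] :=
  stmt_11_general m n r hm hme a hdec hr
end

section
/- Let A be the Hankel tensor of order 4 and dimension 3 with generating vector v = (v_0,…,v_8) given by v_0 = 1, v_1 = −1, v_2 = 1/2, and v_3 = v_4 = ⋯ = v_8 = 0. Then A is Vandermonde positive semi-definite (A u^4 = 1 − 4μ + 5μ² ≥ 0 for every Vandermonde vector u = (1, μ, μ²)), but A is not copositive; in particular, for x = (1, 1/2, 0) ∈ ℝ³_+ one has A x^4 = −1/4 < 0. -/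
/-! At a Vandermonde vector `u = (1, μ, …, μ^{n-1})` a Hankel tensor becomes a polynomial in `μ`:
`A u^m = ∑ₖ s(k,m,n) vₖ μᵏ`. Here `s(0..2; 4,3) = 1, 4, 10`, which gives `1 - 4μ + 5μ²`, a quadratic
with negative discriminant. The witness `x = (1, 1/2, 0)` vanishes in its last coordinate, so `A x^4`
is the value of the dimension-2 Hankel tensor with the same generating vector at the Vandermonde
vector `(1, 1/2)`; in dimension 2 the counts drop to `1, 4, 6`, and `1 - 4/2 + 6/8 = -1/4`. -/

open Finset

/-- The Hankel tensor of order `m` and dimension `n` generated by `v`: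
entries `a_{i_1⋯i_m} = v_{i_1+⋯+i_m-m}` (indices here are 0-based). -/
def hankelT (m n : ℕ) (v : ℕ → ℝ) : (Fin m → Fin n) → ℝ :=
  fun i => v (∑ j, (i j : ℕ))

/-- `s(k,m,n)`: the number of index tuples `(i_1,…,i_m) ∈ [n]^m` with `i_1+⋯+i_m-m = k`. -/
def sCount (m n k : ℕ) : ℕ :=
  (Finset.univ.filter (fun i : Fin m → Fin n => ∑ j, (i j : ℕ) = k)).card

/-- A tensor is Vandermonde positive semi-definite if `A u^m ≥ 0` for every Vandermonde
vector `u = (1, μ, μ², …, μ^{n-1})`. -/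
def IsVPSD (m n : ℕ) (a : (Fin m → Fin n) → ℝ) : Prop :=
  ∀ μ : ℝ, 0 ≤ tApply m n a (fun l => μ ^ (l : ℕ))

def IsCopositive (m n : ℕ) (a : (Fin m → Fin n) → ℝ) : Prop :=
  ∀ x : Fin n → ℝ, (∀ i, 0 ≤ x i) → 0 ≤ tApply m n a x

theorem tApply_hankelT_vandermonde {m n : ℕ} (v : ℕ → ℝ) (μ : ℝ) :
    tApply m n (hankelT m n v) (fun l => μ ^ (l : ℕ)) =
      ∑ k ∈ range (m * (n - 1) + 1), sCount m n k * v k * μ ^ k := by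
  have h_maps : ∀ i : Fin m → Fin n, ∑ j, (i j : ℕ) ∈ range (m * (n - 1) + 1) := by
    intro i
    have : ∑ j, (i j : ℕ) ≤ ∑ _j : Fin m, (n - 1) :=
      sum_le_sum fun j _ => Nat.le_sub_one_of_lt (i j).isLt
    simp only [sum_const, card_univ, Fintype.card_fin, smul_eq_mul] at this
    exact mem_range.mpr (Nat.lt_succ_of_le this)
  unfold tApply hankelT sCount
  simp_rw [prod_pow_eq_pow_sum]
  rw [← sum_fiberwise_of_maps_to (fun i _ => h_maps i)]
  refine sum_congr rfl fun k _ => ?_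
  rw [sum_congr rfl fun i hi => by rw [(mem_filter.mp hi).2], sum_const, nsmul_eq_mul]
  ring

theorem tApply_hankelT_of_eq_zero {m n r : ℕ} (hr : r ≤ n) (v : ℕ → ℝ) (x : Fin n → ℝ)
    (hx : ∀ l : Fin n, r ≤ l → x l = 0) :
    tApply m n (hankelT m n v) x = tApply m r (hankelT m r v) (x ∘ Fin.castLE hr) := by
  let e : (Fin m → Fin r) ↪ (Fin m → Fin n) :=
    ⟨fun i => Fin.castLE hr ∘ i, (Fin.castLE_injective hr).comp_left⟩
  have h_vanish : ∀ i ∉ univ.map e, hankelT m n v i * ∏ j, x (i j) = 0 := by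
    intro i hi
    obtain ⟨j, hj⟩ : ∃ j, r ≤ i j := by
      by_contra! h
      exact hi (mem_map.mpr ⟨fun j => ⟨i j, h j⟩, mem_univ _, rfl⟩)
    rw [prod_eq_zero (mem_univ j) (hx _ hj), mul_zero]
  unfold tApply
  rw [← sum_subset (subset_univ _) fun i _ hi => h_vanish i hi, sum_map]
  rfl

noncomputable def exampleGen (k : ℕ) : ℝ :=
  if k = 0 then 1 else if k = 1 then -1 else if k = 2 then 1/2 else 0

theorem sCount_four_three : sCount 4 3 0 = 1 ∧ sCount 4 3 1 = 4 ∧ sCount 4 3 2 = 10 := by decide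

theorem sCount_four_two : sCount 4 2 0 = 1 ∧ sCount 4 2 1 = 4 ∧ sCount 4 2 2 = 6 := by decide

theorem tApply_exampleGen_vandermonde (μ : ℝ) :
    tApply 4 3 (hankelT 4 3 exampleGen) (fun l => μ ^ (l : ℕ)) = 1 - 4 * μ + 5 * μ ^ 2 := by
  obtain ⟨h0, h1, h2⟩ := sCount_four_three
  rw [tApply_hankelT_vandermonde]
  norm_num [sum_range_succ, exampleGen, h0, h1, h2]
  ring

theorem tApply_exampleGen_witness :
    tApply 4 3 (hankelT 4 3 exampleGen) ![1, 1/2, 0] = -1/4 := by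
  have h_tail : ∀ l : Fin 3, 2 ≤ (l : ℕ) → (![1, 1/2, 0] : Fin 3 → ℝ) l = 0 := by
    intro l hl; fin_cases l <;> simp_all
  have h_restrict : (![1, 1/2, 0] : Fin 3 → ℝ) ∘ Fin.castLE (by norm_num : 2 ≤ 3) =
      fun l : Fin 2 => (1/2 : ℝ) ^ (l : ℕ) := by
    funext l; fin_cases l <;> simp [Fin.castLE]
  obtain ⟨h0, h1, h2⟩ := sCount_four_two
  rw [tApply_hankelT_of_eq_zero (by norm_num) _ _ h_tail, h_restrict,
    tApply_hankelT_vandermonde]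
  norm_num [sum_range_succ, exampleGen, h0, h1, h2]

theorem isVPSD_hankelT_exampleGen : IsVPSD 4 3 (hankelT 4 3 exampleGen) := by
  intro μ
  rw [tApply_exampleGen_vandermonde]
  nlinarith [sq_nonneg (5 * μ - 2)]

theorem not_isCopositive_hankelT_exampleGen : ¬ IsCopositive 4 3 (hankelT 4 3 exampleGen) := by
  intro h_copos
  have h_nonneg : ∀ i, 0 ≤ (![1, 1/2, 0] : Fin 3 → ℝ) i := by
    intro i; fin_cases i <;> norm_num
  have h_value := h_copos _ h_nonneg
  rw [tApply_exampleGen_witness] at h_value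
  norm_num at h_value

/-- Example 4.2: the order 4, dimension 3 Hankel tensor generated by
`v = (1, -1, 1/2, 0, …, 0)` satisfies `A u^4 = 1 - 4μ + 5μ² ≥ 0` for every Vandermonde
vector `u = (1, μ, μ²)`, hence is Vandermonde positive semi-definite, but it is not
copositive; in particular `A x^4 = -1/4` for `x = (1, 1/2, 0)`. -/
theorem stmt_18 :
    (∀ μ : ℝ, tApply 4 3 (hankelT 4 3 (fun k => if k = 0 then 1 else if k = 1 then -1 else if k = 2 then 1/2 else 0)) (fun l => μ ^ (l : ℕ)) = 1 - 4 * μ + 5 * μ ^ 2) ∧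
    IsVPSD 4 3 (hankelT 4 3 (fun k => if k = 0 then 1 else if k = 1 then -1 else if k = 2 then 1/2 else 0)) ∧
    ¬ (∀ x : Fin 3 → ℝ, (∀ i, 0 ≤ x i) →
        0 ≤ tApply 4 3 (hankelT 4 3 (fun k => if k = 0 then 1 else if k = 1 then -1 else if k = 2 then 1/2 else 0)) x) ∧
    tApply 4 3 (hankelT 4 3 (fun k => if k = 0 then 1 else if k = 1 then -1 else if k = 2 then 1/2 else 0)) ![1, 1/2, 0] = -1/4 :=
  ⟨tApply_exampleGen_vandermonde, isVPSD_hankelT_exampleGen, not_isCopositive_hankelT_exampleGen,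
    tApply_exampleGen_witness⟩
end
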